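/- arXiv:2301.00258 — 3 statements merged into one kernel-verified Lean document; each statement's English description precedes it below -/
import Mathlib

section
/- The stock-out free set is monotone in inventory and antitone in demand and backlog: if (v,b) ∈ Q(D), v' ≥ v componentwise, b' ≤ b componentwise, and D' ≤ D componentwise, then (v',b') ∈ Q(D'). -/
open Finset

/-- The stock-out free set `Q(D)`: `(v, b) ∈ Q(D)` iff `v, b ≥ 0` and there exist
substitution amounts `s j k ≥ 0` (supported on `j ∈ Km k`, where `Km k` is the set of
products whose inventory can fulfill demand of product `k`) with
`∑ j, s j k = D k + b k` for all `k` and `∑ j, s k j ≤ v k` for all `k`. -/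
def StockoutFree {ι : Type*} [Fintype ι] (Km : ι → Finset ι) (D v b : ι → ℝ) : Prop :=
  (∀ k, 0 ≤ v k) ∧ (∀ k, 0 ≤ b k) ∧
  ∃ s : ι → ι → ℝ,
    (∀ j k, 0 ≤ s j k) ∧ (∀ j k, j ∉ Km k → s j k = 0) ∧
    (∀ k, ∑ j, s j k = D k + b k) ∧
    (∀ k, ∑ j, s k j ≤ v k)

/-! A smaller total requirement `D' k + b' k ≤ D k + b k` is met by scaling every flow into `k`
by the factor `(D' k + b' k) / (D k + b k) ∈ [0, 1]`; this keeps the support and can only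
lower the outflow from each inventory. -/

lemma exists_unitInterval_mul_eq {α : Type*} [Field α] [LinearOrder α] [IsStrictOrderedRing α]
    {x y : α} (hx : 0 ≤ x) (hxy : x ≤ y) : ∃ c, 0 ≤ c ∧ c ≤ 1 ∧ c * y = x := by
  rcases (hx.trans hxy).eq_or_lt with hy | hy
  · exact ⟨0, le_rfl, zero_le_one, by rw [zero_mul]; exact le_antisymm hx (hy ▸ hxy)⟩
  · exact ⟨x / y, div_nonneg hx hy.le, div_le_one_of_le₀ hxy hy.le, div_mul_cancel₀ x hy.ne'⟩

namespace StockoutFree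

variable {ι : Type*} [Fintype ι] {Km : ι → Finset ι} {D D' v v' b b' : ι → ℝ}

theorem mono_inventory (h : StockoutFree Km D v b) (hv : ∀ k, v k ≤ v' k) :
    StockoutFree Km D v' b := by
  obtain ⟨hv0, hb0, s, hs0, hsupp, hcol, hrow⟩ := h
  exact ⟨fun k => (hv0 k).trans (hv k), hb0, s, hs0, hsupp, hcol,
    fun k => (hrow k).trans (hv k)⟩

theorem of_demand_add_backlog_le (h : StockoutFree Km D v b) (hb' : ∀ k, 0 ≤ b' k)
    (h0 : ∀ k, 0 ≤ D' k + b' k) (hle : ∀ k, D' k + b' k ≤ D k + b k) :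
    StockoutFree Km D' v b' := by
  obtain ⟨hv0, -, s, hs0, hsupp, hcol, hrow⟩ := h
  choose c hc0 hc1 hc using fun k => exists_unitInterval_mul_eq (h0 k) (hle k)
  refine ⟨hv0, hb', fun j k => c k * s j k, fun j k => mul_nonneg (hc0 k) (hs0 j k),
    fun j k hj => by simp only [hsupp j k hj, mul_zero], fun k => ?_, fun k => ?_⟩
  · rw [← mul_sum, hcol k, hc k]
  · calc ∑ j, c j * s k j ≤ ∑ j, s k j :=
          sum_le_sum fun j _ => mul_le_of_le_one_left (hs0 k j) (hc1 j)
      _ ≤ v k := hrow k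

end StockoutFree

/-- Monotonicity of the stock-out free set: more inventory, less backlog and less
demand preserve membership. -/
theorem stockoutFree_mono {ι : Type*} [Fintype ι] (Km : ι → Finset ι)
    (D D' v v' b b' : ι → ℝ)
    (hQ : StockoutFree Km D v b)
    (hvv' : ∀ k, v k ≤ v' k)
    (hb'0 : ∀ k, 0 ≤ b' k) (hb'b : ∀ k, b' k ≤ b k)
    (hD'0 : ∀ k, 0 ≤ D' k) (hD'D : ∀ k, D' k ≤ D k) :
    StockoutFree Km D' v' b' :=
  (hQ.of_demand_add_backlog_le hb'0 (fun k => add_nonneg (hD'0 k) (hb'0 k))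
    (fun k => add_le_add (hD'D k) (hb'b k))).mono_inventory hvv'
end

section
/- Big-M validity of the indicator reformulation: let Ω be a finite scenario set with demands D^ω ∈ ℝ_+^K, and let h_ω(π,β) = ∑_k π_k D^ω_k where (π,β) is dual-feasible (so that ∑_k π_k(D_k+b_k) + ∑_k β_k v_k ≤ 0 for all (v,b) ∈ Q(D)). Sort scenarios so that h_{σ_1} ≥ h_{σ_2} ≥ ... ≥ h_{σ_{|Ω|}}, and let p = ⌊(1−α)|Ω|⌋. Then for any (v,b,z) with z ∈ {0,1}^Ω, ∑_ω z_ω ≤ p, and (v,b) ∈ Q(D^ω) whenever z_ω = 0, the inequality ∑_k β_k v_k + ∑_k π_k b_k ≤ −h_{σ_i}(π,β) + (h_{σ_i}(π,β) − h_{σ_{p+1}}(π,β)) z_{σ_i} holds for each i = 1,...,p. -/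
open Finset

/-- Validity of the strengthened big-M (star) inequalities for the chance-constrained
master problem. Scenarios are indexed by `Fin N` and sorted via `σ` so that the values
`h ω = ∑ k, π k * Dscen ω k` are nonincreasing along `σ`; `p = ⌊(1-α)N⌋`. For any
`(v,b,z)` with binary `z`, `∑ z ≤ p`, and `(v,b) ∈ Q(Dscen ω)` whenever `z ω = 0`,
the star inequality holds for each of the `p` largest scenarios (here `σ i` with
`i < p` plays the role of `σ_{i+1}`, and `σ ⟨p,_⟩` the role of `σ_{p+1}`). -/
theorem bigM_star_inequalities_valid {ι : Type*} [Fintype ι] (Km : ι → Finset ι)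
    {N : ℕ} (Dscen : Fin N → ι → ℝ) (π β : ι → ℝ)
    (hcut : ∀ (D v b : ι → ℝ), StockoutFree Km D v b →
      (∑ k, π k * b k) + (∑ k, β k * v k) ≤ -∑ k, π k * D k)
    (σ : Equiv.Perm (Fin N))
    (hsorted : ∀ i j : Fin N, i ≤ j →
      (∑ k, π k * Dscen (σ j) k) ≤ ∑ k, π k * Dscen (σ i) k)
    (α : ℝ) (p : ℕ) (hp : p = (⌊(1 - α) * (N : ℝ)⌋).toNat) (hpN : p < N)
    (v b : ι → ℝ) (z : Fin N → ℝ)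
    (hz01 : ∀ ω, z ω = 0 ∨ z ω = 1)
    (hzcard : (∑ ω, z ω) ≤ (p : ℝ))
    (hzQ : ∀ ω, z ω = 0 → StockoutFree Km (Dscen ω) v b)
    (i : Fin N) (hi : (i : ℕ) < p) :
    (∑ k, β k * v k) + (∑ k, π k * b k) ≤
      -(∑ k, π k * Dscen (σ i) k) +
        ((∑ k, π k * Dscen (σ i) k) - ∑ k, π k * Dscen (σ ⟨p, hpN⟩) k) * z (σ i) := by
  rcases hz01 (σ i) with h0 | h1
  · have hcuti := hcut (Dscen (σ i)) v b (hzQ (σ i) h0)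
    rw [h0]
    linarith
  · -- find j ≤ p with z (σ j) = 0
    have hex : ∃ j : Fin N, j.val ≤ p ∧ z (σ j) = 0 := by
      by_contra hc
      push_neg at hc
      have hone : ∀ j : Fin N, j.val ≤ p → z (σ j) = 1 := fun j hj =>
        (hz01 (σ j)).resolve_left (hc j hj)
      have hset : Finset.univ.filter (fun j : Fin N => j.val ≤ p) = Finset.Iic ⟨p, hpN⟩ := by
        ext j; simp [Fin.le_def]
      have hsum : ∑ ω ∈ (Finset.Iic (⟨p, hpN⟩ : Fin N)).image σ, z ω ≤ ∑ ω, z ω :=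
        Finset.sum_le_sum_of_subset_of_nonneg (Finset.subset_univ _) (by
          intro ω _ _
          rcases hz01 ω with h | h <;> simp [h])
      have hval : ∑ ω ∈ (Finset.Iic (⟨p, hpN⟩ : Fin N)).image σ, z ω = (p : ℝ) + 1 := by
        rw [Finset.sum_image (fun a _ c _ hac => σ.injective hac)]
        rw [Finset.sum_congr rfl (fun j hj => hone j (by simpa [Fin.le_def] using Finset.mem_Iic.mp hj))]
        simp [Fin.card_Iic]
      linarith
    obtain ⟨j, hjp, hj0⟩ := hex
    have hcutj := hcut (Dscen (σ j)) v b (hzQ (σ j) hj0)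
    have hmono := hsorted j ⟨p, hpN⟩ (by simpa [Fin.le_def] using hjp)
    rw [h1]
    linarith
end

section
/- Validity of mixing inequalities for the chance-constrained set: with notation as before, let T = {t_1,...,t_ℓ} ⊆ {σ_1,...,σ_p} with h_{t_1}(π,β) ≥ h_{t_2}(π,β) ≥ ... ≥ h_{t_ℓ}(π,β), and define h_{t_{ℓ+1}} := h_{σ_{p+1}}. Then every (v,b,z) with z ∈ {0,1}^Ω, ∑_ω z_ω ≤ p, and (v,b) ∈ Q(D^ω) for all ω with z_ω = 0, satisfies ∑_k β_k v_k + ∑_k π_k b_k ≤ −h_{t_1}(π,β) + ∑_{i=1}^{ℓ} (h_{t_i}(π,β) − h_{t_{i+1}}(π,β)) z_{t_i}. -/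
open Finset

/-- Validity of the mixing inequalities for the chance-constrained master problem.
With scenarios sorted so that `h ω = ∑ k, π k * Dscen ω k` is nonincreasing along the
permutation `σ` and `p = ⌊(1-α)N⌋`, for any subset `T = {t 0, ..., t (ℓ-1)}` of the `p`
largest scenarios sorted by decreasing `h`, with `t ℓ := σ_{p+1}`, every feasible
`(v,b,z)` (binary `z`, `∑ z ≤ p`, `z ω = 0 → (v,b) ∈ Q(Dscen ω)`) satisfies the
mixing inequality. -/
theorem mixing_inequality_valid {ι : Type*} [Fintype ι] (Km : ι → Finset ι)
    {N : ℕ} (Dscen : Fin N → ι → ℝ) (π β : ι → ℝ)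
    (hcut : ∀ (ω : Fin N) (v b : ι → ℝ), StockoutFree Km (Dscen ω) v b →
      (∑ k, π k * b k) + (∑ k, β k * v k) ≤ -∑ k, π k * Dscen ω k)
    (σ : Equiv.Perm (Fin N))
    (hsorted : ∀ i j : Fin N, i ≤ j →
      (∑ k, π k * Dscen (σ j) k) ≤ ∑ k, π k * Dscen (σ i) k)
    (α : ℝ) (p : ℕ) (hp : p = (⌊(1 - α) * (N : ℝ)⌋).toNat) (hpN : p < N)
    (ℓ : ℕ) (hℓ : 0 < ℓ) (t : Fin (ℓ + 1) → Fin N)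
    (ht_mem : ∀ i : Fin (ℓ + 1), (i : ℕ) < ℓ → ∃ j : Fin N, (j : ℕ) < p ∧ t i = σ j)
    (ht_last : t ⟨ℓ, Nat.lt_succ_self ℓ⟩ = σ ⟨p, hpN⟩)
    (ht_sorted : ∀ i j : Fin (ℓ + 1), i ≤ j →
      (∑ k, π k * Dscen (t j) k) ≤ ∑ k, π k * Dscen (t i) k)
    (v b : ι → ℝ) (z : Fin N → ℝ)
    (hz01 : ∀ ω, z ω = 0 ∨ z ω = 1)
    (hzcard : (∑ ω, z ω) ≤ (p : ℝ))
    (hzQ : ∀ ω, z ω = 0 → StockoutFree Km (Dscen ω) v b) :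
    (∑ k, β k * v k) + (∑ k, π k * b k) ≤
      -(∑ k, π k * Dscen (t 0) k) +
        ∑ i : Fin ℓ,
          ((∑ k, π k * Dscen (t i.castSucc) k) - ∑ k, π k * Dscen (t i.succ) k)
            * z (t i.castSucc) := by
  classical
  set f : Fin (ℓ+1) → ℝ := fun i => ∑ k, π k * Dscen (t i) k with hf
  set g : ℕ → ℝ := fun n => f ⟨min n ℓ, Nat.lt_succ_of_le (min_le_right _ _)⟩ with hg
  set y : ℝ := -((∑ k, β k * v k) + (∑ k, π k * b k)) with hy
  have hcut' : ∀ ω, z ω = 0 → (∑ k, π k * Dscen ω k) ≤ y := by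
    intro ω hω
    have h := hcut ω v b (hzQ ω hω)
    rw [hy]; linarith
  have hznn : ∀ ω, 0 ≤ z ω := fun ω => by rcases hz01 ω with h|h <;> simp [h]
  have hpN1 : p + 1 ≤ N := hpN
  -- there is some j ≤ p with z (σ j) = 0
  have hex : ∃ j : Fin N, (j:ℕ) ≤ p ∧ z (σ j) = 0 := by
    by_contra hcon
    push_neg at hcon
    have h1 : ∀ j : Fin N, (j:ℕ) ≤ p → z (σ j) = 1 := by
      intro j hj; rcases hz01 (σ j) with h|h
      · exact absurd h (hcon j hj)
      · exact h
    have e1 : ∑ j ∈ (Finset.univ : Finset (Fin (p+1))).image (Fin.castLE hpN1),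
        z (σ j) = (p:ℝ)+1 := by
      rw [Finset.sum_image (fun a _ b _ h => Fin.castLE_injective hpN1 h)]
      rw [Finset.sum_congr rfl (fun j _ => h1 (Fin.castLE hpN1 j)
        (by simpa using Nat.lt_succ_iff.mp j.isLt))]
      simp
    have e2 : ∑ j ∈ (Finset.univ : Finset (Fin (p+1))).image (Fin.castLE hpN1),
        z (σ j) ≤ ∑ j : Fin N, z (σ j) :=
      Finset.sum_le_sum_of_subset_of_nonneg (Finset.subset_univ _)
        (fun i _ _ => hznn _)
    have e3 : ∑ j : Fin N, z (σ j) = ∑ ω, z ω := Equiv.sum_comp σ z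
    rw [e1, e3] at e2
    linarith
  -- g is antitone
  have hΔ : ∀ n : ℕ, g (n+1) ≤ g n := by
    intro n
    exact ht_sorted ⟨min n ℓ, _⟩ ⟨min (n+1) ℓ, _⟩
      (by show min n ℓ ≤ min (n+1) ℓ; omega)
  have hglast : g ℓ ≤ y := by
    obtain ⟨j, hj, hjz⟩ := hex
    have h1 : f ⟨ℓ, Nat.lt_succ_self ℓ⟩ ≤ ∑ k, π k * Dscen (σ j) k := by
      show (∑ k, π k * Dscen (t ⟨ℓ, Nat.lt_succ_self ℓ⟩) k) ≤ _
      rw [ht_last]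
      exact hsorted j ⟨p, hpN⟩ hj
    have h2 : g ℓ = f ⟨ℓ, Nat.lt_succ_self ℓ⟩ := by
      show f _ = f _
      congr 1
      apply Fin.ext
      show min ℓ ℓ = ℓ
      omega
    rw [h2]
    exact h1.trans (hcut' (σ j) hjz)
  -- choose the cutoff m
  have hmain : ∃ m : ℕ, m ≤ ℓ ∧ g m ≤ y ∧
      ∀ i : Fin ℓ, (i:ℕ) < m → z (t i.castSucc) = 1 := by
    by_cases hSe : (Finset.univ.filter (fun i : Fin ℓ => z (t i.castSucc) = 0)) = ∅
    · refine ⟨ℓ, le_refl _, hglast, ?_⟩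
      intro i _
      rcases hz01 (t i.castSucc) with h|h
      · have hmem : i ∈ Finset.univ.filter (fun i : Fin ℓ => z (t i.castSucc) = 0) := by
          simp [h]
        rw [hSe] at hmem
        exact absurd hmem (Finset.notMem_empty i)
      · exact h
    · have hSne : (Finset.univ.filter (fun i : Fin ℓ => z (t i.castSucc) = 0)).Nonempty :=
        Finset.nonempty_iff_ne_empty.mpr hSe
      set i₀ := (Finset.univ.filter (fun i : Fin ℓ => z (t i.castSucc) = 0)).min' hSne
        with hi₀
      have hi₀S : i₀ ∈ Finset.univ.filter (fun i : Fin ℓ => z (t i.castSucc) = 0) :=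
        Finset.min'_mem _ hSne
      have hz0 : z (t i₀.castSucc) = 0 := (Finset.mem_filter.mp hi₀S).2
      refine ⟨(i₀:ℕ), le_of_lt i₀.isLt, ?_, ?_⟩
      · have he : g (i₀:ℕ) = f i₀.castSucc := by
          show f _ = f _
          congr 1
          apply Fin.ext
          show min (i₀:ℕ) ℓ = (i₀:ℕ)
          have := i₀.isLt
          omega
        rw [he]
        exact hcut' (t i₀.castSucc) hz0
      · intro i hi
        rcases hz01 (t i.castSucc) with h|h
        · have hmem : i ∈ Finset.univ.filter (fun i : Fin ℓ => z (t i.castSucc) = 0) := by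
            simp [h]
          have hle : i₀ ≤ i := Finset.min'_le _ i hmem
          have hle' : (i₀:ℕ) ≤ (i:ℕ) := hle
          omega
        · exact h
  obtain ⟨m, hmℓ, hmy, hmone⟩ := hmain
  set zt : ℕ → ℝ := fun n => if h : n < ℓ then z (t (⟨n, h⟩ : Fin ℓ).castSucc) else 1
    with hzt
  have hztnn : ∀ n, 0 ≤ zt n := by
    intro n; rw [hzt]; dsimp only
    split
    · exact hznn _
    · exact zero_le_one
  have hsum1 : ∑ i : Fin ℓ,
      ((∑ k, π k * Dscen (t i.castSucc) k) - ∑ k, π k * Dscen (t i.succ) k)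
        * z (t i.castSucc)
      = ∑ n ∈ Finset.range ℓ, (g n - g (n+1)) * zt n := by
    rw [← Fin.sum_univ_eq_sum_range (fun n => (g n - g (n+1)) * zt n) ℓ]
    refine Finset.sum_congr rfl (fun i _ => ?_)
    have e1 : g (i:ℕ) = f i.castSucc := by
      show f _ = f _
      congr 1
      apply Fin.ext
      show min (i:ℕ) ℓ = (i:ℕ)
      have := i.isLt
      omega
    have e2 : g ((i:ℕ)+1) = f i.succ := by
      show f _ = f _
      congr 1
      apply Fin.ext
      show min ((i:ℕ)+1) ℓ = (i:ℕ)+1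
      have := i.isLt
      omega
    have e3 : zt (i:ℕ) = z (t i.castSucc) := by
      rw [hzt]; dsimp only; rw [dif_pos i.isLt]
    rw [e1, e2, e3]
  have hsum2 : g 0 - g m ≤ ∑ n ∈ Finset.range ℓ, (g n - g (n+1)) * zt n := by
    have hsub : ∑ n ∈ Finset.range m, (g n - g (n+1)) * zt n
        ≤ ∑ n ∈ Finset.range ℓ, (g n - g (n+1)) * zt n :=
      Finset.sum_le_sum_of_subset_of_nonneg (Finset.range_subset_range.mpr hmℓ)
        (fun n _ _ => mul_nonneg (by linarith [hΔ n]) (hztnn n))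
    have heq : ∑ n ∈ Finset.range m, (g n - g (n+1)) * zt n
        = ∑ n ∈ Finset.range m, (g n - g (n+1)) := by
      refine Finset.sum_congr rfl (fun n hn => ?_)
      have hnℓ : n < ℓ := lt_of_lt_of_le (Finset.mem_range.mp hn) hmℓ
      have hone : zt n = 1 := by
        rw [hzt]; dsimp only; rw [dif_pos hnℓ]
        exact hmone ⟨n, hnℓ⟩ (Finset.mem_range.mp hn)
      rw [hone, mul_one]
    have htel : ∑ n ∈ Finset.range m, (g n - g (n+1)) = g 0 - g m :=
      Finset.sum_range_sub' g m
    rw [heq, htel] at hsub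
    exact hsub
  have hg0 : g 0 = ∑ k, π k * Dscen (t 0) k := by
    show f _ = _
    have he : (⟨min 0 ℓ, Nat.lt_succ_of_le (min_le_right _ _)⟩ : Fin (ℓ+1)) = 0 := by
      apply Fin.ext
      show min 0 ℓ = (0 : Fin (ℓ+1)).val
      simp
    rw [he]
  rw [hsum1, ← hg0]
  have hlhs : (∑ k, β k * v k) + (∑ k, π k * b k) = -y := by rw [hy]; ring
  rw [hlhs]
  linarith
end
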